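/- Let α : ℕ × ℕ → ℝ be finitely supported with α(0,0) = 1/6, α(1,0) = √3/12, α(0,1) = −√3/12, α(2,0) = α(0,2) = √5/60, and α(0,j) = α(j,0) for all j > 2, and define Ā(τ,σ) = Σ_{i,j} α(i,j)·P_i(τ)·P_j(σ). If ∫₀¹ ∫₀¹ ∫₀¹ Ā(τ,σ)·Ā(σ,ρ) dρ dσ dτ = 1/120, then α(0,j) = α(j,0) = 0 for all j > 2. -/

import Mathlib

open intervalIntegral

/-- The `n`-th normalized shifted Legendre polynomial on `[0,1]`, via Rodrigues' formula.
For `n = 0` this formula gives the constant `1`. -/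
noncomputable def legP (n : ℕ) (x : ℝ) : ℝ :=
  Real.sqrt (2 * n + 1) / n.factorial *
    iteratedDeriv n (fun t : ℝ => t ^ n * (t - 1) ^ n) x

/-! The polynomials `legP n` are orthonormal in `L²[0,1]`: Rodrigues' formula and repeated
integration by parts (the derivatives of `xⁿ(x-1)ⁿ` of order `< n` vanish at `0` and `1`) give
orthogonality and reduce the norms to the Beta integral `∫₀¹ xⁿ(1-x)ⁿ = n!²/(2n+1)!`.
Expanding `Ā(τ,σ)Ā(σ,ρ)` and integrating one variable at a time, orthonormality collapses the
triple integral to `∑ⱼ α(0,j) α(j,0)`. The terms `j ≤ 2` already add up to `1/120`, and for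
`j > 2` the terms are the squares `α(0,j)²`, so they all vanish. -/

open Polynomial Nat
namespace Polynomial

theorem iterate_derivative_natDegree_eq_C {R : Type*} [Semiring R] (p : R[X]) :
    derivative^[p.natDegree] p = C (p.natDegree ! • p.leadingCoeff) := by
  refine eq_C_of_natDegree_le_zero ((natDegree_iterate_derivative p _).trans (by simp)) |>.trans ?_
  rw [coeff_iterate_derivative, zero_add, descFactorial_self, leadingCoeff]

theorem eval_iterate_derivative_eq_zero_of_pow_dvd {R : Type*} [CommRing R] {p : R[X]} {a : R}
    {n k : ℕ} (hp : (X - C a) ^ n ∣ p) (hk : k < n) : (derivative^[k] p).eval a = 0 :=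
  dvd_iff_isRoot.mp <| (dvd_pow_self _ (Nat.sub_ne_zero_of_lt hk)).trans
    (pow_sub_dvd_iterate_derivative_of_pow_dvd k hp)

end Polynomial

theorem integral_eval_derivative_mul_eval {a b : ℝ} {f : ℝ[X]} (g : ℝ[X])
    (ha : f.eval a = 0) (hb : f.eval b = 0) :
    ∫ x in a..b, (derivative f).eval x * g.eval x
      = -∫ x in a..b, f.eval x * (derivative g).eval x := by
  have := integral_mul_deriv_eq_deriv_mul (fun x _ => g.hasDerivAt x)
    (fun x _ => f.hasDerivAt x) (g.derivative.continuous.intervalIntegrable a b)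
    (f.derivative.continuous.intervalIntegrable a b)
  simp only [ha, hb, mul_zero, sub_zero, zero_sub] at this
  simpa only [mul_comm] using this

theorem integral_eval_iterate_derivative_mul_eval {a b : ℝ} {f : ℝ[X]} (g : ℝ[X]) {m : ℕ}
    (hf : ∀ k < m, (derivative^[k] f).eval a = 0 ∧ (derivative^[k] f).eval b = 0) :
    ∫ x in a..b, (derivative^[m] f).eval x * g.eval x
      = (-1) ^ m * ∫ x in a..b, f.eval x * (derivative^[m] g).eval x := by
  induction m generalizing f with
  | zero => simp
  | succ m ih =>
    have hf' : ∀ k < m, (derivative^[k] (derivative f)).eval a = 0 ∧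
        (derivative^[k] (derivative f)).eval b = 0 := fun k hk =>
      hf (k + 1) (by omega)
    rw [Function.iterate_succ_apply, ih hf', integral_eval_derivative_mul_eval (f := f) _
      (hf 0 m.succ_pos).1 (hf 0 m.succ_pos).2, ← Function.iterate_succ_apply' derivative, pow_succ]
    ring

theorem integral_pow_mul_one_sub_pow (a b : ℕ) :
    ∫ x in (0:ℝ)..1, x ^ a * (1 - x) ^ b = a ! * b ! / (a + b + 1)! := by
  induction b generalizing a with
  | zero =>
    simp only [pow_zero, mul_one, integral_pow, add_zero, factorial_succ]
    push_cast
    field_simp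
    ring
  | succ b ih =>
    have hu : ∀ x ∈ Set.uIcc (0:ℝ) 1, HasDerivAt (fun x : ℝ => (1 - x) ^ (b + 1))
        (-((b + 1 : ℕ) * (1 - x) ^ b)) x := fun x _ =>
      ((hasDerivAt_pow (b + 1) (1 - x)).comp x ((hasDerivAt_id x).const_sub 1)).congr_deriv
        (by simp)
    have hv : ∀ x ∈ Set.uIcc (0:ℝ) 1, HasDerivAt (fun x : ℝ => x ^ (a + 1) / (a + 1 : ℕ))
        (x ^ a) x := fun x _ =>
      ((hasDerivAt_pow (a + 1) x).div_const ((a + 1 : ℕ) : ℝ)).congr_deriv (by field_simp; simp)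
    have hparts := integral_mul_deriv_eq_deriv_mul hu hv
      (Continuous.intervalIntegrable (by fun_prop) _ _)
      (Continuous.intervalIntegrable (by fun_prop) _ _)
    have hrw : ∀ x : ℝ, -((b + 1 : ℕ) * (1 - x) ^ b) * (x ^ (a + 1) / (a + 1 : ℕ))
        = -(((b + 1 : ℕ) : ℝ) / (a + 1 : ℕ)) * (x ^ (a + 1) * (1 - x) ^ b) := fun x => by ring
    simp only [hrw, integral_const_mul, ih] at hparts
    rw [integral_congr fun x _ => mul_comm (x ^ a) ((1 - x) ^ (b + 1)), hparts]
    rw [show a + 1 + b + 1 = a + (b + 1) + 1 by ring, factorial_succ a, factorial_succ b]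
    push_cast
    field_simp
    ring

noncomputable def rodriguesPoly (n : ℕ) : ℝ[X] := X ^ n * (X - C 1) ^ n

theorem rodriguesPoly_monic (n : ℕ) : (rodriguesPoly n).Monic :=
  (monic_X_pow n).mul ((monic_X_sub_C 1).pow n)

theorem natDegree_rodriguesPoly (n : ℕ) : (rodriguesPoly n).natDegree = 2 * n := by
  rw [rodriguesPoly, (monic_X_pow n).natDegree_mul ((monic_X_sub_C 1).pow n), natDegree_X_pow,
    natDegree_pow, natDegree_X_sub_C]
  ring

theorem eval_iterate_derivative_rodriguesPoly_of_lt {n k : ℕ} (hk : k < n) :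
    (derivative^[k] (rodriguesPoly n)).eval 0 = 0 ∧
      (derivative^[k] (rodriguesPoly n)).eval 1 = 0 :=
  ⟨eval_iterate_derivative_eq_zero_of_pow_dvd (by simp [rodriguesPoly]) hk,
    eval_iterate_derivative_eq_zero_of_pow_dvd (dvd_mul_left _ _) hk⟩

theorem Polynomial.iteratedDeriv_eval (p : ℝ[X]) (n : ℕ) :
    iteratedDeriv n (fun x => p.eval x) = fun x => (derivative^[n] p).eval x := by
  induction n with
  | zero => simp
  | succ n ih =>
    rw [iteratedDeriv_succ, ih, Function.iterate_succ_apply']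
    ext x
    exact Polynomial.deriv _

theorem legP_eq (n : ℕ) :
    legP n = fun x => √(2 * n + 1) / n ! * (derivative^[n] (rodriguesPoly n)).eval x := by
  have h : (fun t : ℝ => t ^ n * (t - 1) ^ n) = fun t => (rodriguesPoly n).eval t := by
    simp [rodriguesPoly]
  ext x
  rw [legP, h, iteratedDeriv_eval]

theorem continuous_legP (n : ℕ) : Continuous (legP n) := by
  rw [legP_eq]
  fun_prop

theorem legP_zero : legP 0 = 1 := by
  ext x
  simp [legP]

theorem integral_iterate_derivative_rodriguesPoly_mul_of_lt {j k : ℕ} (h : j < k) :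
    ∫ x in (0:ℝ)..1, (derivative^[j] (rodriguesPoly j)).eval x *
      (derivative^[k] (rodriguesPoly k)).eval x = 0 := by
  have hvanish : derivative^[k] (derivative^[j] (rodriguesPoly j)) = 0 := by
    rw [← Function.iterate_add_apply]
    exact iterate_derivative_eq_zero (by rw [natDegree_rodriguesPoly]; omega)
  simp_rw [mul_comm ((derivative^[j] (rodriguesPoly j)).eval _)]
  rw [integral_eval_iterate_derivative_mul_eval _
    fun i hi => eval_iterate_derivative_rodriguesPoly_of_lt hi, hvanish]
  simp

theorem integral_iterate_derivative_rodriguesPoly_mul_self (n : ℕ) :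
    ∫ x in (0:ℝ)..1, (derivative^[n] (rodriguesPoly n)).eval x *
      (derivative^[n] (rodriguesPoly n)).eval x = n ! ^ 2 / (2 * n + 1) := by
  have htop : derivative^[n] (derivative^[n] (rodriguesPoly n)) = C ((2 * n) ! : ℝ) := by
    rw [← Function.iterate_add_apply, ← two_mul, ← natDegree_rodriguesPoly,
      iterate_derivative_natDegree_eq_C, (rodriguesPoly_monic n).leadingCoeff, nsmul_one]
  have heval : ∀ x : ℝ, (rodriguesPoly n).eval x = (-1) ^ n * (x ^ n * (1 - x) ^ n) := fun x => by
    simp only [rodriguesPoly, eval_mul, eval_pow, eval_X, eval_sub, eval_C]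
    rw [← neg_sub, neg_pow]
    ring
  rw [integral_eval_iterate_derivative_mul_eval _
    fun i hi => eval_iterate_derivative_rodriguesPoly_of_lt hi, htop]
  simp only [heval, eval_C, mul_assoc, integral_const_mul]
  simp only [← mul_assoc, integral_mul_const, integral_pow_mul_one_sub_pow]
  rw [show n + n + 1 = 2 * n + 1 by ring, Nat.factorial_succ]
  push_cast
  field_simp
  rw [← pow_mul, mul_comm, pow_mul]
  simp

theorem integral_legP_mul_legP (j k : ℕ) :
    ∫ x in (0:ℝ)..1, legP j x * legP k x = if j = k then 1 else 0 := by
  have hscale : ∀ j k : ℕ, ∫ x in (0:ℝ)..1, legP j x * legP k x =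
      √(2 * j + 1) / j ! * (√(2 * k + 1) / k !) * ∫ x in (0:ℝ)..1,
        (derivative^[j] (rodriguesPoly j)).eval x * (derivative^[k] (rodriguesPoly k)).eval x := by
    intro j k
    rw [← integral_const_mul, legP_eq, legP_eq]
    congr 1
    ext x
    ring
  rcases lt_trichotomy j k with h | rfl | h
  · rw [hscale, integral_iterate_derivative_rodriguesPoly_mul_of_lt h, if_neg h.ne, mul_zero]
  · rw [hscale, integral_iterate_derivative_rodriguesPoly_mul_self, if_pos rfl]
    have hsq : √(2 * j + 1 : ℝ) ^ 2 = 2 * j + 1 := Real.sq_sqrt (by positivity)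
    field_simp
    exact hsq
  · simp_rw [mul_comm (legP j _)]
    rw [hscale, integral_iterate_derivative_rodriguesPoly_mul_of_lt h, if_neg h.ne', mul_zero]

theorem integral_legP (n : ℕ) : ∫ x in (0:ℝ)..1, legP n x = if n = 0 then 1 else 0 := by
  simpa [legP_zero] using integral_legP_mul_legP n 0

theorem integral_finset_sum_const_mul {ι : Type*} {a b : ℝ} (s : Finset ι) (c : ι → ℝ)
    {f : ι → ℝ → ℝ} (hf : ∀ i ∈ s, IntervalIntegrable (f i) MeasureTheory.volume a b) :
    ∫ x in a..b, ∑ i ∈ s, c i * f i x = ∑ i ∈ s, c i * ∫ x in a..b, f i x := by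
  rw [integral_finsetSum fun i hi => (hf i hi).const_mul (c i)]
  simp_rw [integral_const_mul]

theorem integral_integral_integral_sum_mul_sum {ι κ : Type*} (s : Finset ι) (t : Finset κ)
    (a : ι → ℝ) (b : κ → ℝ) {f g : ι → ℝ → ℝ} {h k : κ → ℝ → ℝ}
    (hf : ∀ i, Continuous (f i)) (hg : ∀ i, Continuous (g i))
    (hh : ∀ j, Continuous (h j)) (hk : ∀ j, Continuous (k j)) :
    ∫ τ in (0:ℝ)..1, ∫ σ in (0:ℝ)..1, ∫ ρ in (0:ℝ)..1,
      (∑ i ∈ s, a i * f i τ * g i σ) * (∑ j ∈ t, b j * h j σ * k j ρ)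
      = ∑ i ∈ s, ∑ j ∈ t, a i * b j * (∫ x in (0:ℝ)..1, f i x) *
          (∫ x in (0:ℝ)..1, g i x * h j x) * ∫ x in (0:ℝ)..1, k j x := by
  set G := fun (p : ι × κ) => ∫ x in (0:ℝ)..1, g p.1 x * h p.2 x
  set K := fun j => ∫ x in (0:ℝ)..1, k j x
  have hρ : ∀ τ σ, ∫ ρ in (0:ℝ)..1,
      (∑ i ∈ s, a i * f i τ * g i σ) * (∑ j ∈ t, b j * h j σ * k j ρ)
      = ∑ p ∈ s ×ˢ t, (a p.1 * b p.2 * f p.1 τ * K p.2) * (g p.1 σ * h p.2 σ) := by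
    intro τ σ
    rw [integral_const_mul, integral_finset_sum_const_mul _ _
      fun j _ => (hk j).intervalIntegrable 0 1, Finset.sum_mul_sum, Finset.sum_product]
    exact Finset.sum_congr rfl fun i _ => Finset.sum_congr rfl fun j _ => by ring
  have hσ : ∀ τ, ∫ σ in (0:ℝ)..1,
      ∑ p ∈ s ×ˢ t, (a p.1 * b p.2 * f p.1 τ * K p.2) * (g p.1 σ * h p.2 σ)
      = ∑ p ∈ s ×ˢ t, (a p.1 * b p.2 * K p.2 * G p) * f p.1 τ := by
    intro τ
    rw [integral_finset_sum_const_mul _ _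
      fun p _ => ((hg p.1).mul (hh p.2)).intervalIntegrable 0 1]
    exact Finset.sum_congr rfl fun p _ => by ring
  simp only [hρ, hσ]
  rw [integral_finset_sum_const_mul _ _ fun p _ => (hf p.1).intervalIntegrable 0 1,
    Finset.sum_product]
  exact Finset.sum_congr rfl fun i _ => Finset.sum_congr rfl fun j _ => by ring

noncomputable def legendreKernel (α : (ℕ × ℕ) →₀ ℝ) (τ σ : ℝ) : ℝ :=
  α.sum fun p c => c * legP p.1 τ * legP p.2 σ

theorem legendreKernel_eq_sum {α : (ℕ × ℕ) →₀ ℝ} {s : Finset ℕ} (hα : α.support ⊆ s ×ˢ s)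
    (τ σ : ℝ) : legendreKernel α τ σ = ∑ p ∈ s ×ˢ s, α p * legP p.1 τ * legP p.2 σ :=
  Finsupp.sum_of_support_subset α hα _ fun _ _ => by simp

theorem integral_integral_integral_legendreKernel_mul {α : (ℕ × ℕ) →₀ ℝ} {s : Finset ℕ}
    (hs : 0 ∈ s) (hα : α.support ⊆ s ×ˢ s) :
    ∫ τ in (0:ℝ)..1, ∫ σ in (0:ℝ)..1, ∫ ρ in (0:ℝ)..1,
      legendreKernel α τ σ * legendreKernel α σ ρ = ∑ j ∈ s, α (0, j) * α (j, 0) := by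
  simp only [legendreKernel_eq_sum hα]
  rw [integral_integral_integral_sum_mul_sum (f := fun p => legP p.1) (g := fun p => legP p.2)
    (h := fun p => legP p.1) (k := fun p => legP p.2) (s ×ˢ s) (s ×ˢ s) α α
    (fun p => continuous_legP p.1) (fun p => continuous_legP p.2)
    (fun p => continuous_legP p.1) (fun p => continuous_legP p.2)]
  simp [integral_legP, integral_legP_mul_legP, Finset.sum_product, hs]

theorem Finset.exists_subset_range_product_range (t : Finset (ℕ × ℕ)) (m : ℕ) :
    ∃ N, m < N ∧ t ⊆ Finset.range N ×ˢ Finset.range N := by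
  obtain ⟨N, hN⟩ := Finset.exists_nat_subset_range (insert m (t.image Prod.fst ∪ t.image Prod.snd))
  refine ⟨N, Finset.mem_range.1 (hN (Finset.mem_insert_self _ _)), fun p hp => ?_⟩
  exact Finset.mem_product.2 ⟨hN (by simp [Finset.mem_image_of_mem _ hp]),
    hN (by simp [Finset.mem_image_of_mem _ hp])⟩

/-- For a Legendre expansion with the prescribed low-order
coefficients and symmetric border coefficients `α(0,j) = α(j,0)` for `j > 2`, the
fifth-order condition `∫₀¹∫₀¹∫₀¹ Ā(τ,σ)Ā(σ,ρ) dρ dσ dτ = 1/120` forces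
`α(0,j) = α(j,0) = 0` for all `j > 2`. -/
theorem order5_condition_thirteen
    (α : (ℕ × ℕ) →₀ ℝ)
    (h00 : α (0, 0) = 1 / 6)
    (h10 : α (1, 0) = Real.sqrt 3 / 12) (h01 : α (0, 1) = -(Real.sqrt 3) / 12)
    (h20 : α (2, 0) = Real.sqrt 5 / 60) (h02 : α (0, 2) = Real.sqrt 5 / 60)
    (hsymm : ∀ j : ℕ, 2 < j → α (0, j) = α (j, 0))
    (A : ℝ → ℝ → ℝ)
    (hA : ∀ τ σ : ℝ, A τ σ = α.sum fun p c => c * legP p.1 τ * legP p.2 σ)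
    (hint : (∫ τ in (0:ℝ)..1, ∫ σ in (0:ℝ)..1, ∫ ρ in (0:ℝ)..1, A τ σ * A σ ρ) = 1 / 120) :
    ∀ j : ℕ, 2 < j → α (0, j) = 0 ∧ α (j, 0) = 0 := by
  intro j hj
  obtain ⟨N, hjN, hα⟩ := α.support.exists_subset_range_product_range j
  have hA_kernel : A = legendreKernel α := funext fun τ => funext (hA τ)
  rw [hA_kernel, integral_integral_integral_legendreKernel_mul (Finset.mem_range.2 (by omega)) hα,
    ← Finset.sum_range_add_sum_Ico _ (by omega : 3 ≤ N)] at hint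
  have hlow : ∑ i ∈ Finset.range 3, α (0, i) * α (i, 0) = 1 / 120 := by
    simp only [Finset.sum_range_succ, Finset.sum_range_zero, h00, h10, h01, h20, h02]
    have h3 : √3 * √3 = 3 := Real.mul_self_sqrt (by norm_num)
    have h5 : √5 * √5 = 5 := Real.mul_self_sqrt (by norm_num)
    linear_combination (-1 / 144 : ℝ) * h3 + (1 / 3600 : ℝ) * h5
  have hsq_nonneg : ∀ i ∈ Finset.Ico 3 N, 0 ≤ α (0, i) * α (i, 0) := fun i hi => by
    rw [← hsymm i (Finset.mem_Ico.1 hi).1]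
    exact mul_self_nonneg _
  have hsq : α (0, j) * α (j, 0) = 0 :=
    (Finset.sum_eq_zero_iff_of_nonneg hsq_nonneg).1 (by linarith) j (Finset.mem_Ico.2 ⟨hj, hjN⟩)
  rw [← hsymm j hj, mul_self_eq_zero] at hsq
  exact ⟨hsq, hsymm j hj ▸ hsq⟩
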